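/- Let d, r be positive integers and let U ∈ M_d(ℂ) ⊗ M_r(ℂ) ≅ M_{dr}(ℂ) be a unitary matrix such that for every C ∈ M_d(M_r(ℂ)) with Tr_r(C) = I_d one has Tr_r(U C U*) = I_d (i.e., the conjugation map C ↦ U C U* is a quantum superchannel). Then there exist unitary matrices U₁ ∈ M_d(ℂ) and U₂ ∈ M_r(ℂ) such that U = U₁ ⊗ U₂. -/

import Mathlib

open scoped Kronecker ComplexOrder Matrix

noncomputable section

/-- Apply a map `φ` between matrix algebras blockwise to a block matrix. -/
def mapBlocks {m A B : Type*} (φ : Matrix A A ℂ → Matrix B B ℂ)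
    (M : Matrix (m × A) (m × A) ℂ) : Matrix (m × B) (m × B) ℂ :=
  Matrix.of fun p q => φ (Matrix.of fun a b => M (p.1, a) (q.1, b)) p.2 q.2

/-- Complete positivity: every blockwise application preserves positive semidefiniteness. -/
def IsCP {A B : Type*} [Fintype A] [Fintype B] (φ : Matrix A A ℂ → Matrix B B ℂ) : Prop :=
  ∀ (n : ℕ) (M : Matrix (Fin n × A) (Fin n × A) ℂ), M.PosSemidef → (mapBlocks φ M).PosSemidef

/-- CPTP: completely positive and trace preserving. -/
def IsCPTP {A B : Type*} [Fintype A] [Fintype B] (φ : Matrix A A ℂ →ₗ[ℂ] Matrix B B ℂ) : Prop :=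
  IsCP ⇑φ ∧ ∀ X, (φ X).trace = X.trace

/-- The Choi matrix of a linear map, `C_φ = Σ_{ij} E_{ij} ⊗ φ(E_{ij})`. -/
def choi {d r : ℕ} (φ : Matrix (Fin d) (Fin d) ℂ →ₗ[ℂ] Matrix (Fin r) (Fin r) ℂ) :
    Matrix (Fin d × Fin r) (Fin d × Fin r) ℂ :=
  Matrix.of fun p q => φ (Matrix.single p.1 q.1 1) p.2 q.2

/-- The trace of the `(i,j)` block of a block matrix. -/
def btr {d r : ℕ} (C : Matrix (Fin d × Fin r) (Fin d × Fin r) ℂ) (i j : Fin d) : ℂ :=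
  ∑ k : Fin r, C (i, k) (j, k)

lemma btr_add {d r : ℕ} (C D : Matrix (Fin d × Fin r) (Fin d × Fin r) ℂ) (i j : Fin d) :
    btr (C + D) i j = btr C i j + btr D i j := by
  simp [btr, Finset.sum_add_distrib]

lemma btr_smul {d r : ℕ} (c : ℂ) (C : Matrix (Fin d × Fin r) (Fin d × Fin r) ℂ) (i j : Fin d) :
    btr (c • C) i j = c * btr C i j := by
  simp [btr, Finset.mul_sum]

/-- The operator system `S(d,r)`: block matrices whose diagonal blocks all have
the same trace and whose off-diagonal blocks have trace zero. -/
def Sset (d r : ℕ) : Set (Matrix (Fin d × Fin r) (Fin d × Fin r) ℂ) :=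
  {C | (∀ i j : Fin d, btr C i i = btr C j j) ∧ ∀ i j : Fin d, i ≠ j → btr C i j = 0}

/-- `S(d,r)` as a subspace. -/
def Ssub (d r : ℕ) : Submodule ℂ (Matrix (Fin d × Fin r) (Fin d × Fin r) ℂ) where
  carrier := Sset d r
  add_mem' := by
    rintro C D ⟨hC1, hC2⟩ ⟨hD1, hD2⟩
    refine ⟨fun i j => ?_, fun i j hij => ?_⟩
    · rw [btr_add, btr_add, hC1 i j, hD1 i j]
    · rw [btr_add, hC2 i j hij, hD2 i j hij, add_zero]
  zero_mem' := by
    refine ⟨fun i j => ?_, fun i j _ => ?_⟩ <;> simp [btr]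
  smul_mem' := by
    rintro c C ⟨hC1, hC2⟩
    refine ⟨fun i j => ?_, fun i j hij => ?_⟩
    · rw [btr_smul, btr_smul, hC1 i j]
    · rw [btr_smul, hC2 i j hij, mul_zero]

/-- The partial trace over the second factor. -/
def ptrace {d r : ℕ} (C : Matrix (Fin d × Fin r) (Fin d × Fin r) ℂ) : Matrix (Fin d) (Fin d) ℂ :=
  Matrix.of fun i j => btr C i j

/-!
Since `Tr_r(I / r) = I_d` and conjugation by `U` fixes scalars, conjugation by `U` preserves the
kernel of the partial trace; by finite-dimensionality so does conjugation by `U*`. That kernel is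
the Hilbert–Schmidt orthogonal complement of `M_d ⊗ 1`, so conjugation by `U` also preserves
`M_d ⊗ 1` and thereby induces a ⋆-automorphism of `M_d`. Every such automorphism is inner,
`A ↦ U₁ A U₁*` with `U₁` unitary; then `(U₁ ⊗ 1)* U` commutes with `M_d ⊗ 1`, so it is `1 ⊗ U₂`.
-/

open Matrix

theorem LinearEquiv.symm_mem_of_forall_mem {K V : Type*} [DivisionRing K] [AddCommGroup V]
    [Module K V] [FiniteDimensional K V] (e : V ≃ₗ[K] V) {p : Submodule K V}
    (he : ∀ x ∈ p, e x ∈ p) {x : V} (hx : x ∈ p) : e.symm x ∈ p := by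
  have hmap : p.map (e : V →ₗ[K] V) = p :=
    Submodule.eq_of_le_of_finrank_eq (Submodule.map_le_iff_le_comap.mpr he) (e.finrank_map_eq p)
  rw [← hmap] at hx
  obtain ⟨y, hy, rfl⟩ := hx
  simpa using hy

theorem StarAlgEquiv.exists_restrict_of_forall_mem_range {K A B : Type*} [Field K] [StarRing K]
    [Ring A] [Algebra K A] [StarRing A] [FiniteDimensional K A] [Ring B] [Algebra K B]
    [StarRing B] [StarModule K B] (κ : A →⋆ₐ[K] B) (hκ : Function.Injective κ)
    (σ : B ≃⋆ₐ[K] B) (hσ : ∀ a, σ (κ a) ∈ κ.range) :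
    ∃ α : A ≃⋆ₐ[K] A, ∀ a, κ (α a) = σ (κ a) := by
  let ι := StarAlgEquiv.ofInjective κ hκ
  let α : A →⋆ₐ[K] A :=
    (ι.symm : κ.range →⋆ₐ[K] A).comp (((σ : B →⋆ₐ[K] B).comp κ).codRestrict κ.range hσ)
  have hα a : κ (α a) = σ (κ a) := congrArg Subtype.val (ι.apply_symm_apply _)
  have hinj : Function.Injective α := fun a b h =>
    hκ (EquivLike.injective σ (by rw [← hα, ← hα, h]))
  exact ⟨.ofBijective α ⟨hinj, LinearMap.injective_iff_surjective (f := α.toAlgHom.toLinearMap)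
    |>.mp hinj⟩, hα⟩

theorem StarAlgEquiv.exists_mem_unitaryGroup_eq_conj {𝕜 n : Type*} [RCLike 𝕜] [Fintype n]
    [DecidableEq n] (f : Matrix n n 𝕜 ≃⋆ₐ[𝕜] Matrix n n 𝕜) :
    ∃ u ∈ unitaryGroup n 𝕜, ∀ A, f A = u * A * star u := by
  let Φ := toEuclideanCLM (n := n) (𝕜 := 𝕜)
  let g := Φ.symm.trans (f.trans Φ)
  obtain ⟨e, he⟩ := g.eq_linearIsometryEquivConjStarAlgEquiv
    (LinearMap.continuous_of_finiteDimensional g.toAlgEquiv.toLinearMap)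
  refine ⟨Φ.symm e, Unitary.map_mem _ (Unitary.linearIsometryEquiv.symm e).2,
    fun A => EquivLike.injective Φ ?_⟩
  have := congr($he (Φ A))
  simp only [g, StarAlgEquiv.trans_apply, StarAlgEquiv.symm_apply_apply] at this
  rw [map_mul, map_mul, map_star, StarAlgEquiv.apply_symm_apply, this,
    LinearIsometryEquiv.conjStarAlgEquiv_apply, LinearIsometryEquiv.star_eq_symm]
  rfl

namespace Matrix

variable {m n R : Type*}

theorem kronecker_one_injective [DecidableEq n] [MulZeroOneClass R] [Nonempty n] :
    Function.Injective fun A : Matrix m m R => A ⊗ₖ (1 : Matrix n n R) := by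
  intro A B h
  ext i j
  obtain ⟨k⟩ := ‹Nonempty n›
  simpa using congr_fun₂ h (i, k) (j, k)

theorem one_kronecker_injective [DecidableEq m] [MulZeroOneClass R] [Nonempty m] :
    Function.Injective fun A : Matrix n n R => (1 : Matrix m m R) ⊗ₖ A := by
  intro A B h
  ext a b
  obtain ⟨k⟩ := ‹Nonempty m›
  simpa using congr_fun₂ h (k, a) (k, b)

variable (m n R) in
def kroneckerOneStarAlgHom [Fintype m] [DecidableEq m] [Fintype n] [DecidableEq n]
    [CommSemiring R] [StarRing R] :
    Matrix m m R →⋆ₐ[R] Matrix (m × n) (m × n) R where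
  toFun A := A ⊗ₖ 1
  map_one' := one_kronecker_one
  map_mul' A B := by rw [← mul_kronecker_mul, one_mul]
  map_zero' := zero_kronecker _
  map_add' A B := add_kronecker A B 1
  commutes' c := by simp [Algebra.algebraMap_eq_smul_one, smul_kronecker]
  map_star' A := by simp [star_eq_conjTranspose, conjTranspose_kronecker]

@[simp]
theorem kroneckerOneStarAlgHom_apply [Fintype m] [DecidableEq m] [Fintype n] [DecidableEq n]
    [CommSemiring R] [StarRing R] (A : Matrix m m R) :
    kroneckerOneStarAlgHom m n R A = A ⊗ₖ 1 := rfl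

theorem eq_one_kronecker_of_forall_commute [Fintype m] [DecidableEq m] [Fintype n]
    [DecidableEq n] [CommSemiring R] (i₀ : m)
    {V : Matrix (m × n) (m × n) R} (hV : ∀ A : Matrix m m R, Commute V (A ⊗ₖ 1)) :
    V = 1 ⊗ₖ of fun a b => V (i₀, a) (i₀, b) := by
  ext ⟨i, a⟩ ⟨p, b⟩
  have h := congr_fun₂ (hV (single p i₀ 1)).eq (i, a) (i₀, b)
  simp only [mul_apply, kroneckerMap_apply, single_apply, and_true, one_apply, mul_ite, mul_one,
    mul_zero, Fintype.sum_prod_type, Finset.sum_ite_eq', Finset.mem_univ, ↓reduceIte,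
    Finset.sum_ite_eq, ite_mul, one_mul, zero_mul] at h
  rw [h]
  by_cases hpi : p = i
  · simp [hpi]
  · simp [hpi, Ne.symm hpi]

theorem exists_mem_unitaryGroup_eq_one_kronecker [Fintype m] [DecidableEq m] [Fintype n]
    [DecidableEq n] [CommRing R] [StarRing R] [Nonempty m]
    {W : Matrix (m × n) (m × n) R} (hW : W ∈ unitaryGroup (m × n) R)
    (hcomm : ∀ A : Matrix m m R, Commute W (A ⊗ₖ 1)) :
    ∃ W₂ ∈ unitaryGroup n R, W = 1 ⊗ₖ W₂ := by
  obtain ⟨i₀⟩ := ‹Nonempty m›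
  refine ⟨_, ?_, eq_one_kronecker_of_forall_commute i₀ hcomm⟩
  rw [eq_one_kronecker_of_forall_commute i₀ hcomm] at hW
  rw [mem_unitaryGroup_iff']
  apply one_kronecker_injective (m := m)
  simpa [star_eq_conjTranspose, conjTranspose_kronecker, ← mul_kronecker_mul] using
    mem_unitaryGroup_iff'.mp hW

end Matrix

theorem Unitary.commute_star_mul_of_conj_eq {M : Type*} [Monoid M] [StarMul M] {u v x : M}
    (hu : u ∈ unitary M) (hv : v ∈ unitary M) (h : u * x * star u = v * x * star v) :
    Commute (star v * u) x :=
  calc star v * u * x = star v * (u * x * star u) * u := by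
        simp [mul_assoc, Unitary.star_mul_self_of_mem hu]
    _ = star v * (v * x * star v) * u := by rw [h]
    _ = x * (star v * u) := by simp [← mul_assoc, Unitary.star_mul_self_of_mem hv]

section PartialTrace

variable {d r : ℕ}

variable (d r) in
def ptraceLinearMap :
    Matrix (Fin d × Fin r) (Fin d × Fin r) ℂ →ₗ[ℂ] Matrix (Fin d) (Fin d) ℂ where
  toFun := ptrace
  map_add' C D := by ext; exact btr_add C D _ _
  map_smul' c C := by ext; exact btr_smul c C _ _

theorem ptrace_add (C D : Matrix (Fin d × Fin r) (Fin d × Fin r) ℂ) :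
    ptrace (C + D) = ptrace C + ptrace D :=
  map_add (ptraceLinearMap d r) C D

theorem ptrace_sub (C D : Matrix (Fin d × Fin r) (Fin d × Fin r) ℂ) :
    ptrace (C - D) = ptrace C - ptrace D :=
  map_sub (ptraceLinearMap d r) C D

theorem ptrace_smul (c : ℂ) (C : Matrix (Fin d × Fin r) (Fin d × Fin r) ℂ) :
    ptrace (c • C) = c • ptrace C :=
  map_smul (ptraceLinearMap d r) c C

theorem ptrace_kronecker_one (B : Matrix (Fin d) (Fin d) ℂ) :
    ptrace (B ⊗ₖ (1 : Matrix (Fin r) (Fin r) ℂ)) = (r : ℂ) • B := by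
  ext i j
  simp [ptrace, btr, one_apply, mul_comm]

theorem ptrace_one : ptrace (1 : Matrix (Fin d × Fin r) (Fin d × Fin r) ℂ) = (r : ℂ) • 1 := by
  rw [← one_kronecker_one, ptrace_kronecker_one]

theorem trace_conjTranspose_mul_kronecker_one (K : Matrix (Fin d × Fin r) (Fin d × Fin r) ℂ)
    (B : Matrix (Fin d) (Fin d) ℂ) :
    (Kᴴ * (B ⊗ₖ (1 : Matrix (Fin r) (Fin r) ℂ))).trace = ((ptrace K)ᴴ * B).trace := by
  simp only [trace, diag_apply, mul_apply, conjTranspose_apply, RCLike.star_def,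
    kroneckerMap_apply, one_apply, mul_ite, mul_one, mul_zero, Fintype.sum_prod_type,
    Finset.sum_ite_eq', Finset.mem_univ, ↓reduceIte, ptrace, btr, of_apply, star_sum,
    Finset.sum_mul]
  exact Finset.sum_congr rfl fun _ _ => Finset.sum_comm

end PartialTrace

section Superchannel

variable {d r : ℕ} {U : Matrix (Fin d × Fin r) (Fin d × Fin r) ℂ}

theorem ptrace_conj_eq_zero (hr : r ≠ 0) (hU : U * Uᴴ = 1)
    (hSC : ∀ C, ptrace C = 1 → ptrace (U * C * Uᴴ) = 1)
    {K : Matrix (Fin d × Fin r) (Fin d × Fin r) ℂ} (hK : ptrace K = 0) :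
    ptrace (U * K * Uᴴ) = 0 := by
  have hone : ptrace ((r : ℂ)⁻¹ • 1 : Matrix (Fin d × Fin r) (Fin d × Fin r) ℂ) = 1 := by
    rw [ptrace_smul, ptrace_one, smul_smul, inv_mul_cancel₀ (Nat.cast_ne_zero.mpr hr), one_smul]
  have h := hSC (K + (r : ℂ)⁻¹ • 1) (by rw [ptrace_add, hK, hone, zero_add])
  simp only [mul_add, add_mul, Matrix.mul_smul, Matrix.smul_mul, mul_one, hU, ptrace_add,
    hone] at h
  exact add_eq_right.mp h

theorem ptrace_conjTranspose_conj_eq_zero (hr : r ≠ 0) (hU : U ∈ unitaryGroup _ ℂ)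
    (hSC : ∀ C, ptrace C = 1 → ptrace (U * C * Uᴴ) = 1)
    {K : Matrix (Fin d × Fin r) (Fin d × Fin r) ℂ} (hK : ptrace K = 0) :
    ptrace (Uᴴ * K * U) = 0 :=
  (Unitary.conjStarAlgAut ℂ _ ⟨U, hU⟩).toAlgEquiv.toLinearEquiv.symm_mem_of_forall_mem
    (p := LinearMap.ker (ptraceLinearMap d r))
    (fun _ hK => ptrace_conj_eq_zero hr (Unitary.mul_star_self_of_mem hU) hSC hK) hK

theorem exists_conj_kronecker_one_eq (hr : r ≠ 0) (hU : U ∈ unitaryGroup _ ℂ)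
    (hSC : ∀ C, ptrace C = 1 → ptrace (U * C * Uᴴ) = 1) (A : Matrix (Fin d) (Fin d) ℂ) :
    ∃ B, U * (A ⊗ₖ 1) * Uᴴ = B ⊗ₖ (1 : Matrix (Fin r) (Fin r) ℂ) := by
  set M := U * (A ⊗ₖ 1) * Uᴴ
  set B := (r : ℂ)⁻¹ • ptrace M
  refine ⟨B, sub_eq_zero.mp ?_⟩
  set K := M - B ⊗ₖ 1
  have hK : ptrace K = 0 := by
    rw [ptrace_sub, ptrace_kronecker_one, smul_smul, mul_inv_cancel₀ (Nat.cast_ne_zero.mpr hr),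
      one_smul, sub_self]
  -- `K` is Hilbert–Schmidt orthogonal to `M` and to `B ⊗ 1`, hence to itself.
  have hKM : (Kᴴ * M).trace = 0 := by
    calc (Kᴴ * M).trace = ((Uᴴ * K * U)ᴴ * (A ⊗ₖ 1)).trace := by
          simp only [M, conjTranspose_mul, conjTranspose_conjTranspose, mul_assoc]
          rw [trace_mul_comm Uᴴ]
          simp only [mul_assoc]
      _ = 0 := by
          rw [trace_conjTranspose_mul_kronecker_one,
            ptrace_conjTranspose_conj_eq_zero hr hU hSC hK, conjTranspose_zero, zero_mul,
            trace_zero]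
  have hKB : (Kᴴ * (B ⊗ₖ 1)).trace = 0 := by
    rw [trace_conjTranspose_mul_kronecker_one, hK, conjTranspose_zero, zero_mul, trace_zero]
  rw [← trace_conjTranspose_mul_self_eq_zero_iff]
  calc (Kᴴ * K).trace = (Kᴴ * M).trace - (Kᴴ * (B ⊗ₖ 1)).trace := by
        rw [← trace_sub, ← mul_sub]
    _ = 0 := by rw [hKM, hKB, sub_zero]

end Superchannel

/-- every unitary superchannel is conjugation by a tensor product of
unitaries: if `U ∈ M_d ⊗ M_r` is unitary and `C ↦ U C U*` preserves the condition
`Tr_r(C) = I_d`, then `U = U₁ ⊗ U₂` for unitaries `U₁ ∈ M_d`, `U₂ ∈ M_r`. -/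
theorem unitary_superchannel_is_tensor (d r : ℕ) (hd : 0 < d) (hr : 0 < r)
    (U : Matrix (Fin d × Fin r) (Fin d × Fin r) ℂ)
    (hU : U ∈ Matrix.unitaryGroup (Fin d × Fin r) ℂ)
    (hSC : ∀ C : Matrix (Fin d × Fin r) (Fin d × Fin r) ℂ, ptrace C = 1 →
      ptrace (U * C * Uᴴ) = 1) :
    ∃ (U₁ : Matrix (Fin d) (Fin d) ℂ) (U₂ : Matrix (Fin r) (Fin r) ℂ),
      U₁ ∈ Matrix.unitaryGroup (Fin d) ℂ ∧ U₂ ∈ Matrix.unitaryGroup (Fin r) ℂ ∧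
      U = U₁ ⊗ₖ U₂ := by
  have : Nonempty (Fin d) := Fin.pos_iff_nonempty.mp hd
  have : Nonempty (Fin r) := Fin.pos_iff_nonempty.mp hr
  let κ := kroneckerOneStarAlgHom (Fin d) (Fin r) ℂ
  obtain ⟨α, hα⟩ := StarAlgEquiv.exists_restrict_of_forall_mem_range κ kronecker_one_injective
    (Unitary.conjStarAlgAut ℂ _ ⟨U, hU⟩)
    fun A => (exists_conj_kronecker_one_eq hr.ne' hU hSC A).imp fun _ hB => hB.symm
  obtain ⟨U₁, hU₁, hαU₁⟩ := α.exists_mem_unitaryGroup_eq_conj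
  have hκU₁ : κ U₁ ∈ unitaryGroup _ ℂ := Unitary.map_mem κ hU₁
  have hcomm (A : Matrix (Fin d) (Fin d) ℂ) : Commute (star (κ U₁) * U) (A ⊗ₖ 1) :=
    Unitary.commute_star_mul_of_conj_eq hU hκU₁ <|
      calc U * κ A * star U = κ (α A) := (hα A).symm
        _ = κ U₁ * κ A * star (κ U₁) := by rw [hαU₁, map_mul, map_mul, map_star]
  obtain ⟨U₂, hU₂, hW⟩ := exists_mem_unitaryGroup_eq_one_kronecker
    (mul_mem (Unitary.star_mem hκU₁) hU) hcomm
  refine ⟨U₁, U₂, hU₁, hU₂, ?_⟩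
  calc U = κ U₁ * (star (κ U₁) * U) := by
        rw [← mul_assoc, Unitary.mul_star_self_of_mem hκU₁, one_mul]
    _ = U₁ ⊗ₖ U₂ := by
        rw [hW, kroneckerOneStarAlgHom_apply, ← mul_kronecker_mul, mul_one, one_mul]

end
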